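/- arXiv:2305.18634 — 5 statements merged into one kernel-verified Lean document; each statement's English description precedes it below -/
import Mathlib

section
/- Let ν be a Borel measure on ℝ^d with ν({0}) = 0 satisfying ∫_{|x|≤2} |x|^2 ν(dx) + ∫_{|x|>2} (log|x|)^α ν(dx) < ∞, and define M_α as M_α(B) = ∫_{ℝ^d} ∫_0^1 1_B(yr) (-log r)^(α-1) r^(-1) dr ν(dy) for α > 0. Then for any p > 0, ∫_{|x|≤1} |x|^p M_α(dx) < ∞ if and only if ∫_{|x|≤1} |x|^p ν(dx) < ∞. -/
open MeasureTheory Real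
open scoped ENNReal

/-!
The substitution `r = exp (-u) / a` turns `∫₀^{1/a} (r a)^p (-log r)^(α-1) r⁻¹ dr` into
`∫₀^∞ (u + log a)^(α-1) e^{-pu} du`. For `‖y‖ ≤ 1` the indicator in the inner integral is
identically one and the inner integral equals `‖y‖^p Γ(α) / p^α`; for `‖y‖ > 1` it is the shifted
Gamma integral above with `a = ‖y‖`, which is `O((log ‖y‖)^α)` at infinity. The hypothesis on `ν`
makes the contribution of `‖y‖ > 1` finite, so the left side is `Γ(α) / p^α` times the right side
plus a finite quantity.
-/

open Set

theorem lintegral_Ioo_exp_neg_eq_lintegral_Ioi (L : ℝ) (g : ℝ → ℝ≥0∞) :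
    ∫⁻ r in Ioo 0 (exp (-L)), g r =
      ∫⁻ u in Ioi 0, ENNReal.ofReal (exp (-(u + L))) * g (exp (-(u + L))) := by
  have himage : (fun u => exp (-(u + L))) '' Ioi 0 = Ioo 0 (exp (-L)) := by
    ext r
    constructor
    · rintro ⟨u, hu, rfl⟩
      exact ⟨exp_pos _, exp_lt_exp.2 (by linarith [mem_Ioi.1 hu])⟩
    · rintro ⟨hr0, hrL⟩
      have := log_lt_log hr0 hrL
      rw [log_exp] at this
      exact ⟨-log r - L, mem_Ioi.2 (by linarith), by simp [exp_log hr0]⟩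
  have hderiv : ∀ u ∈ Ioi (0 : ℝ),
      HasDerivWithinAt (fun u => exp (-(u + L))) (-exp (-(u + L))) (Ioi 0) u := fun u _ => by
    simpa using (((hasDerivAt_id u).add_const L).neg.exp).hasDerivWithinAt
  rw [← himage, lintegral_image_eq_lintegral_abs_deriv_mul measurableSet_Ioi hderiv
    (fun u _ v _ h => by simpa using h)]
  simp_rw [abs_neg, abs_of_pos (exp_pos _)]

theorem lintegral_rpow_mul_exp_neg_mul_Ioi {s p : ℝ} (hs : 0 < s) (hp : 0 < p) :
    ∫⁻ u in Ioi 0, ENNReal.ofReal (u ^ (s - 1) * exp (-(p * u))) =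
      ENNReal.ofReal ((1 / p) ^ s * Gamma s) := by
  have hint : IntegrableOn (fun u : ℝ => u ^ (s - 1) * exp (-(p * u))) (Ioi 0) := by
    simpa [rpow_one, neg_mul] using
      integrableOn_rpow_mul_exp_neg_mul_rpow (by linarith : -1 < s - 1) one_pos hp
  rw [← integral_rpow_mul_exp_neg_mul_Ioi hs hp, ofReal_integral_eq_lintegral_ofReal hint
    ((ae_restrict_iff' measurableSet_Ioi).2 (ae_of_all _ fun u hu =>
      mul_nonneg (rpow_nonneg (le_of_lt hu) _) (exp_pos _).le))]

theorem lintegral_Ioo_inv_eq_lintegral_Ioi_exp (α p : ℝ) {a : ℝ} (ha : 0 < a) :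
    ∫⁻ r in Ioo 0 a⁻¹, ENNReal.ofReal ((r * a) ^ p * ((-log r) ^ (α - 1) * r⁻¹)) =
      ∫⁻ u in Ioi 0, ENNReal.ofReal ((u + log a) ^ (α - 1) * exp (-(p * u))) := by
  rw [← exp_log ha, ← exp_neg, lintegral_Ioo_exp_neg_eq_lintegral_Ioi]
  refine setLIntegral_congr_fun measurableSet_Ioi fun u _ => ?_
  simp only [← ENNReal.ofReal_mul (exp_pos _).le, log_exp]
  congr 1
  have hu : exp (-(u + log a)) * exp (log a) = exp (-u) := by rw [← exp_add]; ring_nf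
  rw [hu, ← exp_mul, neg_neg, exp_neg]
  field_simp

theorem lintegral_rpow_mul_neg_log_rpow {α p : ℝ} (hα : 0 < α) (hp : 0 < p) :
    ∫⁻ r in Ioo 0 1, ENNReal.ofReal (r ^ p * ((-log r) ^ (α - 1) * r⁻¹)) =
      ENNReal.ofReal ((1 / p) ^ α * Gamma α) := by
  have h := lintegral_Ioo_inv_eq_lintegral_Ioi_exp α p one_pos
  simp only [inv_one, mul_one, log_one, add_zero] at h
  rw [h, lintegral_rpow_mul_exp_neg_mul_Ioi hα hp]

theorem add_rpow_sub_one_le {u L α : ℝ} (hu : 0 ≤ u) (hL : 0 < L) (hα : 0 ≤ α) :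
    (u + L) ^ (α - 1) ≤ 2 ^ α * (u ^ (α - 1) + L ^ (α - 1)) := by
  have hu' := rpow_nonneg hu (α - 1)
  have hL' := rpow_nonneg hL.le (α - 1)
  rcases le_total α 1 with hα1 | hα1
  · calc (u + L) ^ (α - 1) ≤ L ^ (α - 1) :=
          rpow_le_rpow_of_nonpos hL (le_add_of_nonneg_left hu) (by linarith)
      _ ≤ 1 * (u ^ (α - 1) + L ^ (α - 1)) := by linarith
      _ ≤ 2 ^ α * (u ^ (α - 1) + L ^ (α - 1)) := by
          gcongr
          exact one_le_rpow (by norm_num) hα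
  · have hmax : max u L ^ (α - 1) ≤ u ^ (α - 1) + L ^ (α - 1) := by
      rcases max_cases u L with ⟨h, _⟩ | ⟨h, _⟩ <;> rw [h] <;> linarith
    calc (u + L) ^ (α - 1) ≤ (2 * max u L) ^ (α - 1) := by
          gcongr
          linarith [le_max_left u L, le_max_right u L]
      _ = 2 ^ (α - 1) * max u L ^ (α - 1) := mul_rpow (by norm_num) (hL.le.trans (le_max_right _ _))
      _ ≤ 2 ^ α * (u ^ (α - 1) + L ^ (α - 1)) := by
          gcongr
          · norm_num
          · linarith

theorem lintegral_add_rpow_mul_exp_neg_le {α p L : ℝ} (hα : 0 < α) (hp : 0 < p) (hL : 0 < L) :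
    ∫⁻ u in Ioi 0, ENNReal.ofReal ((u + L) ^ (α - 1) * exp (-(p * u))) ≤
      ENNReal.ofReal (2 ^ α * ((1 / p) ^ α * Gamma α + L ^ (α - 1) * (1 / p))) := by
  have hexp : ∫⁻ u in Ioi 0, ENNReal.ofReal (exp (-(p * u))) = ENNReal.ofReal (1 / p) := by
    simpa using lintegral_rpow_mul_exp_neg_mul_Ioi one_pos hp
  calc ∫⁻ u in Ioi 0, ENNReal.ofReal ((u + L) ^ (α - 1) * exp (-(p * u)))
      ≤ ∫⁻ u in Ioi 0, ENNReal.ofReal (2 ^ α) * (ENNReal.ofReal (u ^ (α - 1) * exp (-(p * u))) +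
          ENNReal.ofReal (L ^ (α - 1)) * ENNReal.ofReal (exp (-(p * u)))) := by
        refine setLIntegral_mono' measurableSet_Ioi fun u hu => ?_
        have hu : (0 : ℝ) ≤ u := le_of_lt hu
        rw [← ENNReal.ofReal_mul (by positivity),
          ← ENNReal.ofReal_add (by positivity) (by positivity),
          ← ENNReal.ofReal_mul (by positivity)]
        refine ENNReal.ofReal_le_ofReal ?_
        calc (u + L) ^ (α - 1) * exp (-(p * u))
            ≤ 2 ^ α * (u ^ (α - 1) + L ^ (α - 1)) * exp (-(p * u)) := by
              gcongr
              exact add_rpow_sub_one_le hu hL hα.le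
          _ = _ := by ring
    _ = ENNReal.ofReal (2 ^ α) * (ENNReal.ofReal ((1 / p) ^ α * Gamma α) +
          ENNReal.ofReal (L ^ (α - 1)) * ENNReal.ofReal (1 / p)) := by
        rw [lintegral_const_mul' _ _ ENNReal.ofReal_ne_top, lintegral_add_left (by fun_prop),
          lintegral_const_mul' _ _ ENNReal.ofReal_ne_top, lintegral_rpow_mul_exp_neg_mul_Ioi hα hp,
          hexp]
    _ = _ := by
        rw [← ENNReal.ofReal_mul (by positivity),
          ← ENNReal.ofReal_add (by positivity) (by positivity),
          ← ENNReal.ofReal_mul (by positivity)]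

section RadialMoment

variable {E : Type*} [NormedAddCommGroup E] [NormedSpace ℝ E]

/-- `∫ radialMoment α p ∂ν` is `∫_{‖x‖≤1} ‖x‖^p M_α(dx)`. -/
noncomputable def radialMoment (α p : ℝ) (y : E) : ℝ≥0∞ :=
  ∫⁻ r in Ioo (0 : ℝ) 1, {x : E | ‖x‖ ≤ 1}.indicator
    (fun x => ENNReal.ofReal (‖x‖ ^ p * ((-log r) ^ (α - 1) * r⁻¹))) (r • y)

theorem radialMoment_eq (α p : ℝ) (y : E) :
    radialMoment α p y = ∫⁻ r in {r : ℝ | r * ‖y‖ ≤ 1} ∩ Ioo 0 1,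
      ENNReal.ofReal ((r * ‖y‖) ^ p * ((-log r) ^ (α - 1) * r⁻¹)) := by
  have hmeas : MeasurableSet {r : ℝ | r * ‖y‖ ≤ 1} :=
    measurableSet_le (by fun_prop) measurable_const
  rw [← Measure.restrict_restrict hmeas, ← lintegral_indicator hmeas]
  refine setLIntegral_congr_fun measurableSet_Ioo fun r hr => ?_
  simp only [indicator, mem_ofPred_eq, norm_smul, norm_of_nonneg hr.1.le]

theorem lintegral_Ioo_mul_rpow_mul_neg_log_rpow {α p a : ℝ} (hα : 0 < α) (hp : 0 < p)
    (ha : 0 ≤ a) :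
    ∫⁻ r in Ioo 0 1, ENNReal.ofReal ((r * a) ^ p * ((-log r) ^ (α - 1) * r⁻¹)) =
      ENNReal.ofReal (a ^ p) * ENNReal.ofReal ((1 / p) ^ α * Gamma α) := by
  rw [← lintegral_rpow_mul_neg_log_rpow hα hp, ← lintegral_const_mul' _ _ ENNReal.ofReal_ne_top]
  refine setLIntegral_congr_fun measurableSet_Ioo fun r hr => ?_
  rw [← ENNReal.ofReal_mul (rpow_nonneg ha _), mul_rpow hr.1.le ha]
  ring_nf

theorem radialMoment_le {α p : ℝ} (hα : 0 < α) (hp : 0 < p) (y : E) :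
    radialMoment α p y ≤ ENNReal.ofReal (‖y‖ ^ p) * ENNReal.ofReal ((1 / p) ^ α * Gamma α) :=
  (radialMoment_eq α p y).trans_le <| (lintegral_mono_set inter_subset_right).trans_eq <|
    lintegral_Ioo_mul_rpow_mul_neg_log_rpow hα hp (norm_nonneg y)

theorem radialMoment_of_norm_le_one {α p : ℝ} (hα : 0 < α) (hp : 0 < p) {y : E} (hy : ‖y‖ ≤ 1) :
    radialMoment α p y = ENNReal.ofReal (‖y‖ ^ p) * ENNReal.ofReal ((1 / p) ^ α * Gamma α) := by
  have hsub : Ioo (0 : ℝ) 1 ⊆ {r | r * ‖y‖ ≤ 1} := fun r hr =>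
    mul_le_one₀ hr.2.le (norm_nonneg y) hy
  rw [radialMoment_eq, inter_eq_right.2 hsub,
    lintegral_Ioo_mul_rpow_mul_neg_log_rpow hα hp (norm_nonneg y)]

theorem radialMoment_of_one_lt_norm (α p : ℝ) {y : E} (hy : 1 < ‖y‖) :
    radialMoment α p y =
      ∫⁻ u in Ioi 0, ENNReal.ofReal ((u + log ‖y‖) ^ (α - 1) * exp (-(p * u))) := by
  have hy0 : 0 < ‖y‖ := one_pos.trans hy
  have hset : {r : ℝ | r * ‖y‖ ≤ 1} ∩ Ioo 0 1 = Ioc 0 ‖y‖⁻¹ := by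
    ext r
    simp only [mem_inter_iff, mem_ofPred_eq, mem_Ioo, mem_Ioc, ← le_div_iff₀ hy0, one_div]
    have := inv_lt_one_of_one_lt₀ hy
    constructor
    · rintro ⟨h, h0, -⟩
      exact ⟨h0, h⟩
    · rintro ⟨h0, h⟩
      exact ⟨h, h0, h.trans_lt this⟩
  rw [radialMoment_eq, hset, Measure.restrict_congr_set Ioo_ae_eq_Ioc.symm,
    lintegral_Ioo_inv_eq_lintegral_Ioi_exp α p hy0]

theorem exists_radialMoment_le_log_rpow {α p c : ℝ} (hα : 0 < α) (hp : 0 < p) (hc : 1 < c) :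
    ∃ K, 0 ≤ K ∧ ∀ y : E, c ≤ ‖y‖ → radialMoment α p y ≤ ENNReal.ofReal (K * log ‖y‖ ^ α) := by
  set A := (1 / p) ^ α * Gamma α
  have hA : 0 ≤ A := by positivity
  have hℓ : 0 < log c := log_pos hc
  refine ⟨2 ^ α * (A / log c ^ α + 1 / p / log c), by positivity, fun y hy => ?_⟩
  have hL : log c ≤ log ‖y‖ := log_le_log (by linarith) hy
  have hL0 : 0 < log ‖y‖ := hℓ.trans_le hL
  rw [radialMoment_of_one_lt_norm α p (hc.trans_le hy)]
  refine (lintegral_add_rpow_mul_exp_neg_le hα hp hL0).trans (ENNReal.ofReal_le_ofReal ?_)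
  have hconst : A ≤ A * (log ‖y‖ ^ α / log c ^ α) :=
    le_mul_of_one_le_right hA ((one_le_div (by positivity)).2 (rpow_le_rpow hℓ.le hL hα.le))
  have hpow : log ‖y‖ ^ (α - 1) ≤ log ‖y‖ ^ α / log c := by
    rw [rpow_sub_one hL0.ne']
    exact div_le_div_of_nonneg_left (by positivity) hℓ hL
  calc 2 ^ α * (A + log ‖y‖ ^ (α - 1) * (1 / p))
      ≤ 2 ^ α * (A * (log ‖y‖ ^ α / log c ^ α) + log ‖y‖ ^ α / log c * (1 / p)) := by
        gcongr
    _ = 2 ^ α * (A / log c ^ α + 1 / p / log c) * log ‖y‖ ^ α := by ring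

variable [MeasurableSpace E] [OpensMeasurableSpace E]

theorem setLIntegral_compl_unitBall_radialMoment_lt_top {α p : ℝ} (hα : 0 < α) (hp : 0 < p)
    (ν : Measure E)
    (hν : (∫⁻ x in {x | ‖x‖ ≤ 2}, ENNReal.ofReal (‖x‖ ^ 2) ∂ν) +
        (∫⁻ x in {x | 2 < ‖x‖}, ENNReal.ofReal (log ‖x‖ ^ α) ∂ν) < ∞) :
    ∫⁻ y in {y : E | ‖y‖ ≤ 1}ᶜ, radialMoment α p y ∂ν < ∞ := by
  obtain ⟨K, hK0, hK⟩ := exists_radialMoment_le_log_rpow (E := E) hα hp one_lt_two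
  set C := (1 / p) ^ α * Gamma α
  have hS₁ : MeasurableSet {y : E | ‖y‖ ≤ 1} :=
    (isClosed_le continuous_norm continuous_const).measurableSet
  have hS₂ : MeasurableSet {y : E | ‖y‖ ≤ 2} :=
    (isClosed_le continuous_norm continuous_const).measurableSet
  have hcompl : {y : E | ‖y‖ ≤ 2}ᶜ = {y | 2 < ‖y‖} := by ext; simp
  have hmid : ∀ y ∈ {y : E | ‖y‖ ≤ 2}, {y : E | ‖y‖ ≤ 1}ᶜ.indicator (radialMoment α p) y ≤
      ENNReal.ofReal (2 ^ p * C) * ENNReal.ofReal (‖y‖ ^ 2) := by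
    intro y hy2
    by_cases hy1 : ‖y‖ ≤ 1
    · simp [hy1]
    · rw [indicator_of_mem hy1, ← ENNReal.ofReal_mul (by positivity)]
      refine (radialMoment_le hα hp y).trans ?_
      rw [← ENNReal.ofReal_mul (by positivity)]
      refine ENNReal.ofReal_le_ofReal ?_
      have h2 : ‖y‖ ^ p ≤ 2 ^ p := rpow_le_rpow (norm_nonneg y) hy2 hp.le
      have h1 : 1 ≤ ‖y‖ ^ 2 := one_le_pow₀ (not_le.1 hy1).le
      calc ‖y‖ ^ p * C ≤ 2 ^ p * C * 1 := by rw [mul_one]; gcongr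
        _ ≤ 2 ^ p * C * ‖y‖ ^ 2 := by gcongr
  have htail : ∀ y ∈ {y : E | 2 < ‖y‖}, {y : E | ‖y‖ ≤ 1}ᶜ.indicator (radialMoment α p) y ≤
      ENNReal.ofReal K * ENNReal.ofReal (log ‖y‖ ^ α) := fun y hy =>
    (indicator_le_self _ _ y).trans <| (hK y (le_of_lt hy)).trans_eq (ENNReal.ofReal_mul hK0)
  obtain ⟨h₂, hlog⟩ := ENNReal.add_lt_top.1 hν
  calc ∫⁻ y in {y : E | ‖y‖ ≤ 1}ᶜ, radialMoment α p y ∂ν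
      = (∫⁻ y in {y : E | ‖y‖ ≤ 2}, {y : E | ‖y‖ ≤ 1}ᶜ.indicator (radialMoment α p) y ∂ν) +
        ∫⁻ y in {y : E | 2 < ‖y‖}, {y : E | ‖y‖ ≤ 1}ᶜ.indicator (radialMoment α p) y ∂ν := by
        rw [← hcompl, lintegral_add_compl _ hS₂, lintegral_indicator hS₁.compl]
    _ ≤ (∫⁻ y in {y : E | ‖y‖ ≤ 2}, ENNReal.ofReal (2 ^ p * C) * ENNReal.ofReal (‖y‖ ^ 2) ∂ν) +
        ∫⁻ y in {y : E | 2 < ‖y‖}, ENNReal.ofReal K * ENNReal.ofReal (log ‖y‖ ^ α) ∂ν :=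
        add_le_add (setLIntegral_mono' hS₂ hmid) (setLIntegral_mono' (hcompl ▸ hS₂.compl) htail)
    _ < ∞ := by
        rw [lintegral_const_mul' _ _ ENNReal.ofReal_ne_top,
          lintegral_const_mul' _ _ ENNReal.ofReal_ne_top]
        exact ENNReal.add_lt_top.2 ⟨ENNReal.mul_lt_top ENNReal.ofReal_lt_top h₂,
          ENNReal.mul_lt_top ENNReal.ofReal_lt_top hlog⟩

end RadialMoment

theorem stmt5_general {d : ℕ} (α p : ℝ) (hα : 0 < α) (hp : 0 < p)
    (ν : Measure (EuclideanSpace ℝ (Fin d)))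
    (hν : (∫⁻ x in {x | ‖x‖ ≤ 2}, ENNReal.ofReal (‖x‖ ^ 2) ∂ν) +
        (∫⁻ x in {x | 2 < ‖x‖}, ENNReal.ofReal ((Real.log ‖x‖) ^ α) ∂ν) < ∞) :
    (∫⁻ y, (∫⁻ r in Set.Ioo (0 : ℝ) 1,
        ({x : EuclideanSpace ℝ (Fin d) | ‖x‖ ≤ 1}).indicator
          (fun x => ENNReal.ofReal (‖x‖ ^ p * ((-Real.log r) ^ (α - 1) * r⁻¹))) (r • y)) ∂ν) < ∞
      ↔ (∫⁻ x in {x : EuclideanSpace ℝ (Fin d) | ‖x‖ ≤ 1}, ENNReal.ofReal (‖x‖ ^ p) ∂ν) < ∞ := by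
  have hS : MeasurableSet {x : EuclideanSpace ℝ (Fin d) | ‖x‖ ≤ 1} :=
    (isClosed_le continuous_norm continuous_const).measurableSet
  have hC : ENNReal.ofReal ((1 / p) ^ α * Gamma α) ≠ 0 := (ENNReal.ofReal_pos.2 (by positivity)).ne'
  have hball : ∫⁻ y in {x : EuclideanSpace ℝ (Fin d) | ‖x‖ ≤ 1}, radialMoment α p y ∂ν =
      (∫⁻ x in {x : EuclideanSpace ℝ (Fin d) | ‖x‖ ≤ 1}, ENNReal.ofReal (‖x‖ ^ p) ∂ν) *
        ENNReal.ofReal ((1 / p) ^ α * Gamma α) := by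
    rw [← lintegral_mul_const' _ _ ENNReal.ofReal_ne_top]
    exact setLIntegral_congr_fun hS fun y hy => radialMoment_of_norm_le_one hα hp hy
  change (∫⁻ y, radialMoment α p y ∂ν) < ∞ ↔ _
  rw [← lintegral_add_compl _ hS, hball, ENNReal.add_lt_top,
    and_iff_left (setLIntegral_compl_unitBall_radialMoment_lt_top hα hp ν hν)]
  exact ⟨fun h => ENNReal.lt_top_of_mul_ne_top_left h.ne hC,
    fun h => ENNReal.mul_lt_top h ENNReal.ofReal_lt_top⟩

/-- For `ν` with `ν {0} = 0` and
`∫_{‖x‖≤2} ‖x‖² ν(dx) + ∫_{‖x‖>2} (log ‖x‖)^α ν(dx) < ∞`, and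
`M_α(B) = ∫ ∫_0^1 1_B(r y) (-log r)^(α-1) r⁻¹ dr ν(dy)`: for any `p > 0`,
`∫_{‖x‖≤1} ‖x‖^p M_α(dx) < ∞ ↔ ∫_{‖x‖≤1} ‖x‖^p ν(dx) < ∞`. -/
theorem stmt5 {d : ℕ} (α p : ℝ) (hα : 0 < α) (hp : 0 < p)
    (ν : Measure (EuclideanSpace ℝ (Fin d))) (hν0 : ν {0} = 0)
    (hν : (∫⁻ x in {x | ‖x‖ ≤ 2}, ENNReal.ofReal (‖x‖ ^ 2) ∂ν) +
        (∫⁻ x in {x | 2 < ‖x‖}, ENNReal.ofReal ((Real.log ‖x‖) ^ α) ∂ν) < ∞) :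
    (∫⁻ y, (∫⁻ r in Set.Ioo (0 : ℝ) 1,
        ({x : EuclideanSpace ℝ (Fin d) | ‖x‖ ≤ 1}).indicator
          (fun x => ENNReal.ofReal (‖x‖ ^ p * ((-Real.log r) ^ (α - 1) * r⁻¹))) (r • y)) ∂ν) < ∞
      ↔ (∫⁻ x in {x : EuclideanSpace ℝ (Fin d) | ‖x‖ ≤ 1}, ENNReal.ofReal (‖x‖ ^ p) ∂ν) < ∞ :=
  stmt5_general α p hα hp ν hν
end

section
/- Let ℓ be a slowly varying function at 0 (i.e., ℓ(xt)/ℓ(x) → 1 as x → 0+ for every t > 0). Fix t > s > 0. Then ℓ(1 - (s/t)^(1/n)) / ℓ(1/n) → 1 as n → ∞. -/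
/-!
Put `h y = log ℓ(e^{-y})`, so that slow variation says `h(y + v) - h(y) → 0` as `y → ∞` for
each fixed `v`. Since `n (1 - (s/t)^{1/n}) → log (t/s)`, the argument `1 - (s/t)^{1/n}` is
`(1/n) c_n` with `c_n → log (t/s) > 0`, so it suffices that the convergence is locally uniform in
`v`. This is the uniform convergence theorem; for measurable `h` it follows from Egorov's theorem:
on sets of measure close to full in two intervals the convergences of the shifts of `h` at `u_n`
and at `u_n + v_n` are uniform, and by translation invariance of Lebesgue measure the two sets
meet after shifting by `v_n`.
-/

open Filter Real MeasureTheory Set Topology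

theorem tendsto_one_div_natCast_nhdsGT_zero :
    Tendsto (fun n : ℕ => (1 : ℝ) / n) atTop (𝓝[>] 0) := by
  simpa only [one_div, Function.comp_def] using
    tendsto_inv_atTop_nhdsGT_zero.comp tendsto_natCast_atTop_atTop

theorem tendsto_nat_mul_one_sub_rpow_one_div {r : ℝ} (hr : 0 < r) :
    Tendsto (fun n : ℕ => n * (1 - r ^ ((1 : ℝ) / n))) atTop (𝓝 (-log r)) := by
  have hslope := (hasStrictDerivAt_const_rpow hr 0).hasDerivAt.tendsto_slope_zero_right
  rw [rpow_zero, one_mul] at hslope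
  refine ((hslope.comp tendsto_one_div_natCast_nhdsGT_zero).neg).congr fun n => ?_
  simp only [zero_add, smul_eq_mul, one_div, Function.comp_apply, inv_inv]
  ring

theorem ofReal_sub_le_volume_Icc_sdiff {a b δ : ℝ} {t : Set ℝ} (hδ : 0 ≤ δ)
    (ht : volume t ≤ ENNReal.ofReal δ) :
    ENNReal.ofReal (b - a - δ) ≤ volume (Icc a b \ t) :=
  calc ENNReal.ofReal (b - a - δ) = ENNReal.ofReal (b - a) - ENNReal.ofReal δ :=
        ENNReal.ofReal_sub _ hδ
    _ ≤ volume (Icc a b) - volume t := by rw [volume_Icc]; gcongr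
    _ ≤ volume (Icc a b \ t) := le_measure_sdiff

theorem tendsto_sub_of_tendsto_shift {h : ℝ → ℝ} (hm : Measurable h) {u v : ℕ → ℝ} {v₀ : ℝ}
    (hv : Tendsto v atTop (𝓝 v₀))
    (hu : ∀ x, Tendsto (fun n => h (u n + x) - h (u n)) atTop (𝓝 0))
    (huv : ∀ x, Tendsto (fun n => h (u n + v n + x) - h (u n + v n)) atTop (𝓝 0)) :
    Tendsto (fun n => h (u n + v n) - h (u n)) atTop (𝓝 0) := by
  have hshift : ∀ w : ℕ → ℝ, ∀ n, StronglyMeasurable fun x => h (w n + x) - h (w n) :=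
    fun w n => ((hm.comp (measurable_const_add _)).sub_const _).stronglyMeasurable
  obtain ⟨t₁, -, ht₁, hvol₁, hunif₁⟩ := tendstoUniformlyOn_of_ae_tendsto (hshift u)
    stronglyMeasurable_const measurableSet_Icc
    (measure_Icc_lt_top (μ := volume) (a := v₀ - 1) (b := v₀ + 1)).ne
    (ae_of_all _ fun x _ => hu x) (by norm_num : (0 : ℝ) < 1 / 2)
  obtain ⟨t₂, -, ht₂, hvol₂, hunif₂⟩ := tendstoUniformlyOn_of_ae_tendsto (hshift (u + v))
    stronglyMeasurable_const measurableSet_Icc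
    (measure_Icc_lt_top (μ := volume) (a := -1) (b := 1)).ne
    (ae_of_all _ fun x _ => huv x) (by norm_num : (0 : ℝ) < 1 / 2)
  rw [Metric.tendsto_nhds]
  intro ε hε
  filter_upwards [Metric.tendstoUniformlyOn_iff.1 hunif₁ (ε / 2) (half_pos hε),
    Metric.tendstoUniformlyOn_iff.1 hunif₂ (ε / 2) (half_pos hε),
    Metric.tendsto_nhds.1 hv (1 / 4) (by norm_num)] with n hn₁ hn₂ hvn
  obtain ⟨hvn_ge, hvn_le⟩ := abs_lt.1 (Real.dist_eq _ _ ▸ hvn)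
  set A := Icc (-1 : ℝ) 1 \ t₂
  set B := (· + v n) ⁻¹' (Icc (v₀ - 1) (v₀ + 1) \ t₁)
  -- Both good sets have measure at least `3/2` and lie in an interval of length `5/2`.
  have hAB : volume (Icc (-5 / 4 : ℝ) (5 / 4)) < volume A + volume B := by
    rw [measure_preimage_add_right, volume_Icc]
    calc ENNReal.ofReal (5 / 4 - -5 / 4) < ENNReal.ofReal (1 - -1 - 1 / 2) +
          ENNReal.ofReal (v₀ + 1 - (v₀ - 1) - 1 / 2) := by
          rw [← ENNReal.ofReal_add (by norm_num) (by linarith)]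
          exact (ENNReal.ofReal_lt_ofReal_iff (by norm_num)).2 (by linarith)
      _ ≤ _ := add_le_add (ofReal_sub_le_volume_Icc_sdiff (by norm_num) hvol₂)
          (ofReal_sub_le_volume_Icc_sdiff (by norm_num) hvol₁)
  obtain ⟨x, hxA, hxB⟩ : (A ∩ B).Nonempty := nonempty_inter_of_measure_lt_add volume
    ((measurableSet_Icc.diff ht₁).preimage (measurable_add_const _))
    (fun y hy => show y ∈ Icc _ _ from ⟨by linarith [hy.1.1], by linarith [hy.1.2]⟩)
    (fun y hy => show y ∈ Icc _ _ from ⟨by linarith [hy.1.1], by linarith [hy.1.2]⟩) hAB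
  have e₁ := hn₁ (x + v n) hxB
  have e₂ := hn₂ x hxA
  simp only [Pi.add_apply, Real.dist_eq, zero_sub, abs_neg, sub_zero] at e₁ e₂ ⊢
  calc |h (u n + v n) - h (u n)|
      = |(h (u n + (x + v n)) - h (u n)) - (h (u n + v n + x) - h (u n + v n))| := by
        ring_nf
    _ ≤ |h (u n + (x + v n)) - h (u n)| + |h (u n + v n + x) - h (u n + v n)| := abs_sub _ _
    _ < ε := by linarith

section SlowVariation

variable {ℓ : ℝ → ℝ} (hpos : ∀ x : ℝ, 0 < x → x ≤ 1 → 0 < ℓ x)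
  (hslow : ∀ t : ℝ, 0 < t → Tendsto (fun x => ℓ (x * t) / ℓ x) (𝓝[>] 0) (𝓝 1))
include hpos hslow

theorem tendsto_log_comp_exp_neg_add_sub {ι : Type*} {L : Filter ι} {p : ι → ℝ}
    (hp : Tendsto p L atTop) (v : ℝ) :
    Tendsto (fun i => log (ℓ (exp (-(p i + v)))) - log (ℓ (exp (-p i)))) L (𝓝 0) := by
  have hexp : Tendsto (fun i => exp (-p i)) L (𝓝[>] 0) :=
    tendsto_nhdsWithin_of_tendsto_nhds_of_eventually_within _
      (tendsto_exp_atBot.comp (tendsto_neg_atBot_iff.2 hp))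
      (Eventually.of_forall fun _ => exp_pos _)
  have hlog := ((continuousAt_log one_ne_zero).tendsto.comp
    ((hslow _ (exp_pos (-v))).comp hexp))
  rw [log_one] at hlog
  refine hlog.congr' ?_
  filter_upwards [hp.eventually_ge_atTop 0, hp.eventually_ge_atTop (-v)] with i hi₀ hiv
  have hx : exp (-(p i + v)) ≤ 1 := exp_le_one_iff.2 (by linarith)
  have hy : exp (-p i) ≤ 1 := exp_le_one_iff.2 (by linarith)
  rw [neg_add, exp_add] at hx ⊢
  simp only [Function.comp_apply]
  rw [log_div (hpos _ (by positivity) hx).ne' (hpos _ (exp_pos _) hy).ne']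

theorem tendsto_div_comp_mul_of_slowlyVarying (hmeas : Measurable ℓ) {x c : ℕ → ℝ} {c₀ : ℝ}
    (hx : Tendsto x atTop (𝓝[>] 0)) (hc : Tendsto c atTop (𝓝 c₀)) (hc₀ : 0 < c₀) :
    Tendsto (fun n => ℓ (x n * c n) / ℓ (x n)) atTop (𝓝 1) := by
  set h : ℝ → ℝ := fun y => log (ℓ (exp (-y)))
  have hu : Tendsto (fun n => -log (x n)) atTop atTop :=
    tendsto_neg_atBot_atTop.comp (tendsto_log_nhdsGT_zero.comp hx)
  have hv : Tendsto (fun n => -log (c n)) atTop (𝓝 (-log c₀)) :=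
    ((continuousAt_log hc₀.ne').tendsto.comp hc).neg
  have hlim := tendsto_sub_of_tendsto_shift (h := h)
    (measurable_log.comp (hmeas.comp (measurable_exp.comp measurable_neg))) hv
    (tendsto_log_comp_exp_neg_add_sub hpos hslow hu)
    (tendsto_log_comp_exp_neg_add_sub hpos hslow (hu.atTop_add hv))
  have hexp := (continuous_exp.tendsto 0).comp hlim
  rw [exp_zero] at hexp
  have hxc : Tendsto (fun n => x n * c n) atTop (𝓝 0) := by
    simpa using (tendsto_nhds_of_tendsto_nhdsWithin hx).mul hc
  refine hexp.congr' ?_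
  filter_upwards [hx.eventually (Ioc_mem_nhdsGT zero_lt_one), hc.eventually (lt_mem_nhds hc₀),
    hxc.eventually (Iic_mem_nhds zero_lt_one)] with n ⟨hx₀, hx₁⟩ hcn hxc₁
  have hxc₀ : 0 < x n * c n := mul_pos hx₀ hcn
  simp only [Function.comp_apply, h, neg_add, neg_neg, exp_add, exp_log hx₀, exp_log hcn]
  rw [exp_sub, exp_log (hpos _ hxc₀ hxc₁), exp_log (hpos _ hx₀ hx₁)]

end SlowVariation

/-- If `ℓ` is (measurable, positive on `(0,1]`) slowly varying at `0`, i.e.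
`ℓ(x t)/ℓ(x) → 1` as `x → 0+` for every `t > 0`, then for fixed `t > s > 0`,
`ℓ(1 - (s/t)^(1/n)) / ℓ(1/n) → 1` as `n → ∞`. -/
theorem stmt8 (ℓ : ℝ → ℝ) (hmeas : Measurable ℓ)
    (hpos : ∀ x : ℝ, 0 < x → x ≤ 1 → 0 < ℓ x)
    (hslow : ∀ t : ℝ, 0 < t →
      Tendsto (fun x => ℓ (x * t) / ℓ x) (nhdsWithin 0 (Set.Ioi 0)) (nhds 1))
    (s t : ℝ) (hs : 0 < s) (hst : s < t) :
    Tendsto (fun n : ℕ => ℓ (1 - (s / t) ^ ((1 : ℝ) / n)) / ℓ (1 / n))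
      atTop (nhds 1) := by
  have ht : 0 < t := hs.trans hst
  have hr : 0 < s / t := div_pos hs ht
  have hc₀ : 0 < -log (s / t) := neg_pos.2 (log_neg hr ((div_lt_one ht).2 hst))
  refine (tendsto_div_comp_mul_of_slowlyVarying hpos hslow hmeas
    tendsto_one_div_natCast_nhdsGT_zero (tendsto_nat_mul_one_sub_rpow_one_div hr) hc₀).congr' ?_
  filter_upwards [eventually_ne_atTop 0] with n hn
  rw [one_div, inv_mul_cancel_left₀ (Nat.cast_ne_zero.2 hn)]
end

section
/- Let X_1, X_2, … be i.i.d. random variables with values in [0,1] and P(X_1 > x) = (1-x)^α ℓ(1-x) for x ∈ [0,1], where α > 0 and ℓ is slowly varying at 0. Let N_n be integers with N_n n^(-α) ℓ(1/n) → c ∈ (0,∞). Then for any fixed t > s > 0, N_n P(X_1 > (s/t)^(1/n)) → c (log(t/s))^α as n → ∞. -/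
open Filter Real MeasureTheory ProbabilityTheory

lemma aux_ratio9 (ℓ : ℝ → ℝ) (α L : ℝ) (hα : 0 < α) (hL : 0 < L)
    (hcomp : ∀ e : ℝ, 0 < e →
      Tendsto (fun n : ℕ => ℓ ((1/(n:ℝ)) * e) / ℓ (1/(n:ℝ))) atTop (nhds 1))
    (hmono : ∀ a b : ℝ, 0 < a → a ≤ b → b ≤ 1 → a ^ α * ℓ a ≤ b ^ α * ℓ b)
    (hpos : ∀ᶠ n : ℕ in atTop, 0 < ℓ (1/(n:ℝ)))
    (d u : ℕ → ℝ)
    (hd : ∀ᶠ n : ℕ in atTop, 0 < d n ∧ d n ≤ 1 ∧ u n = n * d n)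
    (hu : Tendsto u atTop (nhds L)) :
    Tendsto (fun n : ℕ => ℓ (d n) / ℓ (1/(n:ℝ))) atTop (nhds 1) := by
  have hsmall : Tendsto (fun n : ℕ => (1/(n:ℝ))) atTop (nhds 0) :=
    tendsto_one_div_atTop_nhds_zero_nat
  have hAB : ∀ e : ℝ, 0 < e →
      Tendsto (fun n : ℕ => ℓ ((1/(n:ℝ)) * (e*L)) / ℓ (1/(n:ℝ)) * (e*L / u n) ^ α)
        atTop (nhds (e ^ α)) := by
    intro e he
    have h1 := hcomp (e*L) (mul_pos he hL)
    have h2 : Tendsto (fun n : ℕ => e*L / u n) atTop (nhds e) := by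
      have h := Tendsto.div (tendsto_const_nhds (x := e*L) (f := atTop (α := ℕ))) hu hL.ne'
      rw [show e*L/L = e from by field_simp] at h
      exact h
    have h3 : Tendsto (fun n : ℕ => (e*L / u n) ^ α) atTop (nhds (e ^ α)) :=
      (Real.continuousAt_rpow_const e α (Or.inl he.ne')).tendsto.comp h2
    simpa using h1.mul h3
  have hupper : ∀ e : ℝ, 1 < e → ∀ᶠ n : ℕ in atTop,
      ℓ (d n) / ℓ (1/(n:ℝ)) ≤ ℓ ((1/(n:ℝ)) * (e*L)) / ℓ (1/(n:ℝ)) * (e*L / u n) ^ α := by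
    intro e he
    have heL : 0 < e * L := mul_pos (lt_trans one_pos he) hL
    have hle1 : ∀ᶠ n : ℕ in atTop, (1/(n:ℝ)) * (e*L) ≤ 1 := by
      have : Tendsto (fun n : ℕ => (1/(n:ℝ)) * (e*L)) atTop (nhds 0) := by
        simpa using hsmall.mul_const (e*L)
      exact this.eventually_le_const one_pos
    filter_upwards [hpos, hd, hle1, hu.eventually_lt_const (by nlinarith : L < e*L),
      eventually_ge_atTop 1] with n hln hdn hone hul hn1
    obtain ⟨hd0, hd1, hud⟩ := hdn
    have hnp : (0:ℝ) < n := by exact_mod_cast hn1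
    have hup : 0 < u n := by rw [hud]; positivity
    set a := (1/(n:ℝ)) * (e*L) with ha
    have hap : 0 < a := by rw [ha]; positivity
    have had : d n ≤ a := by
      rw [ha, one_div, le_inv_mul_iff₀ hnp, ← hud]
      exact hul.le
    have key := hmono (d n) a hd0 had hone
    have hdα : (0:ℝ) < (d n) ^ α := rpow_pos_of_pos hd0 α
    have hfrac : e*L / u n = a / d n := by
      rw [ha, hud]; field_simp
    have step1 : ℓ (d n) ≤ ℓ a * (e*L / u n) ^ α := by
      rw [hfrac, Real.div_rpow hap.le hd0.le,
        show ℓ a * (a ^ α / d n ^ α) = (a ^ α * ℓ a) / d n ^ α from by ring,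
        le_div_iff₀ hdα]
      nlinarith [key]
    calc ℓ (d n) / ℓ (1/(n:ℝ))
        ≤ (ℓ a * (e*L / u n) ^ α) / ℓ (1/(n:ℝ)) :=
          (div_le_div_iff_of_pos_right hln).mpr step1
      _ = ℓ a / ℓ (1/(n:ℝ)) * (e*L / u n) ^ α := by ring
  have hlower : ∀ e : ℝ, 0 < e → e < 1 → ∀ᶠ n : ℕ in atTop,
      ℓ ((1/(n:ℝ)) * (e*L)) / ℓ (1/(n:ℝ)) * (e*L / u n) ^ α ≤ ℓ (d n) / ℓ (1/(n:ℝ)) := by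
    intro e he he1
    have heL : 0 < e * L := mul_pos he hL
    filter_upwards [hpos, hd, hu.eventually_const_lt (by nlinarith : e*L < L),
      eventually_ge_atTop 1] with n hln hdn hul hn1
    obtain ⟨hd0, hd1, hud⟩ := hdn
    have hnp : (0:ℝ) < n := by exact_mod_cast hn1
    have hup : 0 < u n := lt_trans heL hul
    set a := (1/(n:ℝ)) * (e*L) with ha
    have hap : 0 < a := by rw [ha]; positivity
    have had : a ≤ d n := by
      rw [ha, one_div, inv_mul_le_iff₀ hnp, ← hud]
      exact hul.le
    have key := hmono a (d n) hap had hd1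
    have hdα : (0:ℝ) < (d n) ^ α := rpow_pos_of_pos hd0 α
    have hfrac : e*L / u n = a / d n := by
      rw [ha, hud]; field_simp
    have step1 : ℓ a * (e*L / u n) ^ α ≤ ℓ (d n) := by
      rw [hfrac, Real.div_rpow hap.le hd0.le,
        show ℓ a * (a ^ α / d n ^ α) = (a ^ α * ℓ a) / d n ^ α from by ring,
        div_le_iff₀ hdα]
      nlinarith [key]
    calc ℓ a / ℓ (1/(n:ℝ)) * (e*L / u n) ^ α
        = (ℓ a * (e*L / u n) ^ α) / ℓ (1/(n:ℝ)) := by ring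
      _ ≤ ℓ (d n) / ℓ (1/(n:ℝ)) := (div_le_div_iff_of_pos_right hln).mpr step1
  rw [tendsto_order]
  constructor
  · intro b hb
    have hcont : Tendsto (fun e : ℝ => e ^ α) (nhdsWithin 1 (Set.Ioo 0 1)) (nhds 1) := by
      have : ContinuousAt (fun e : ℝ => e ^ α) 1 :=
        Real.continuousAt_rpow_const 1 α (Or.inl one_ne_zero)
      simpa using (this.tendsto.mono_left nhdsWithin_le_nhds)
    have hne : (nhdsWithin (1:ℝ) (Set.Ioo 0 1)).NeBot := by
      apply mem_closure_iff_nhdsWithin_neBot.mp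
      rw [closure_Ioo (by norm_num : (0:ℝ) ≠ 1)]
      exact ⟨by norm_num, le_refl 1⟩
    obtain ⟨e, hbe, he⟩ :=
      ((hcont.eventually (eventually_gt_nhds hb)).and
        (eventually_mem_nhdsWithin (s := Set.Ioo 0 1))).exists
    filter_upwards [hlower e he.1 he.2, (hAB e he.1).eventually_const_lt hbe] with n h1 h2
    exact lt_of_lt_of_le h2 h1
  · intro b hb
    have hcont : Tendsto (fun e : ℝ => e ^ α) (nhdsWithin 1 (Set.Ioi 1)) (nhds 1) := by
      have : ContinuousAt (fun e : ℝ => e ^ α) 1 :=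
        Real.continuousAt_rpow_const 1 α (Or.inl one_ne_zero)
      simpa using (this.tendsto.mono_left nhdsWithin_le_nhds)
    obtain ⟨e, hbe, he⟩ :=
      ((hcont.eventually (eventually_lt_nhds hb)).and
        (eventually_mem_nhdsWithin (s := Set.Ioi 1))).exists
    filter_upwards [hupper e he, (hAB e (lt_trans one_pos he)).eventually_lt_const hbe]
      with n h1 h2
    exact lt_of_le_of_lt h1 h2


/-- Let `X₁` have values in `[0,1]` with `P(X₁ > x) = (1-x)^α ℓ(1-x)`, where `α > 0`
and `ℓ` is slowly varying at `0`. If `N_n n^(-α) ℓ(1/n) → c ∈ (0,∞)`, then for fixed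
`t > s > 0`, `N_n P(X₁ > (s/t)^(1/n)) → c (log(t/s))^α`. -/
theorem stmt9 {Ω : Type*} [MeasureSpace Ω] (P : Measure Ω) [IsProbabilityMeasure P]
    (X : Ω → ℝ) (hX : ∀ ω, X ω ∈ Set.Icc (0 : ℝ) 1)
    (α : ℝ) (hα : 0 < α) (ℓ : ℝ → ℝ)
    (hslow : ∀ t : ℝ, 0 < t →
      Tendsto (fun x => ℓ (x * t) / ℓ x) (nhdsWithin 0 (Set.Ioi 0)) (nhds 1))
    (htail : ∀ x ∈ Set.Icc (0 : ℝ) 1,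
      (P {ω | x < X ω}).toReal = (1 - x) ^ α * ℓ (1 - x))
    (N : ℕ → ℕ) (c : ℝ) (hc : 0 < c)
    (hN : Tendsto (fun n : ℕ => (N n : ℝ) * (n : ℝ) ^ (-α) * ℓ (1 / n)) atTop (nhds c))
    (s t : ℝ) (hs : 0 < s) (hst : s < t) :
    Tendsto (fun n : ℕ => (N n : ℝ) * (P {ω | (s / t) ^ ((1 : ℝ) / n) < X ω}).toReal)
      atTop (nhds (c * (Real.log (t / s)) ^ α)) := by
  have ht : 0 < t := hs.trans hst
  have hr0 : 0 < s / t := div_pos hs ht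
  have hr1 : s / t < 1 := (div_lt_one ht).mpr hst
  set L := Real.log (t / s) with hLdef
  have hL : 0 < L := Real.log_pos ((one_lt_div hs).mpr hst)
  have hLr : Real.log (s / t) = -L := by
    rw [hLdef, Real.log_div hs.ne' ht.ne', Real.log_div ht.ne' hs.ne']; ring
  have hlrne : Real.log (s / t) ≠ 0 := by rw [hLr]; exact neg_ne_zero.mpr hL.ne'
  set d : ℕ → ℝ := fun n => 1 - (s / t) ^ ((1 : ℝ) / n) with hddef
  set u : ℕ → ℝ := fun n => n * d n with hudef
  have hsmallIoi : Tendsto (fun n : ℕ => (1:ℝ)/n) atTop (nhdsWithin 0 (Set.Ioi 0)) := by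
    refine tendsto_nhdsWithin_of_tendsto_nhds_of_eventually_within _
      tendsto_one_div_atTop_nhds_zero_nat ?_
    filter_upwards [eventually_gt_atTop 0] with n hn
    simp only [Set.mem_Ioi]
    positivity
  -- u → L
  have hu : Tendsto u atTop (nhds L) := by
    have hslope : Tendsto (slope Real.exp 0) (nhdsWithin 0 {0}ᶜ) (nhds 1) := by
      have := Real.hasDerivAt_exp 0
      rw [hasDerivAt_iff_tendsto_slope] at this
      simpa using this
    have hh : Tendsto (fun n : ℕ => Real.log (s/t) * (1/n)) atTop (nhdsWithin 0 {0}ᶜ) := by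
      refine tendsto_nhdsWithin_of_tendsto_nhds_of_eventually_within _ ?_ ?_
      · have := tendsto_one_div_atTop_nhds_zero_nat.const_mul (Real.log (s/t))
        simpa using this
      · filter_upwards [eventually_gt_atTop 0] with n hn
        have hn' : ((n:ℝ)) ≠ 0 := Nat.cast_ne_zero.mpr hn.ne'
        simp only [Set.mem_compl_iff, Set.mem_singleton_iff]
        exact mul_ne_zero hlrne (one_div_ne_zero hn')
    have hcomp := (hslope.comp hh).const_mul (-Real.log (s/t))
    rw [mul_one, hLr, neg_neg] at hcomp
    refine hcomp.congr' ?_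
    filter_upwards [eventually_ge_atTop 1] with n hn
    have hnp : (0:ℝ) < n := by exact_mod_cast hn
    have hxe : (s/t) ^ ((1:ℝ)/(n:ℝ)) = Real.exp (-L * (1/(n:ℝ))) := by
      rw [Real.rpow_def_of_pos hr0, hLr]
    have harg : -L * (1/(n:ℝ)) ≠ 0 :=
      mul_ne_zero (neg_ne_zero.mpr hL.ne') (one_div_ne_zero hnp.ne')
    simp only [Function.comp_apply, slope_def_field, Real.exp_zero, sub_zero,
      hudef, hddef, hxe]
    rw [← mul_div_assoc, div_eq_iff harg]
    field_simp
    ring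
  -- positivity of ℓ (1/n)
  have hcomp : ∀ e : ℝ, 0 < e →
      Tendsto (fun n : ℕ => ℓ ((1/(n:ℝ)) * e) / ℓ (1/(n:ℝ))) atTop (nhds 1) :=
    fun e he => (hslow e he).comp hsmallIoi
  have hnonneg : ∀ y : ℝ, 0 < y → y ≤ 1 → 0 ≤ y ^ α * ℓ y := by
    intro y hy0 hy1
    have h := htail (1 - y) ⟨by linarith, by linarith⟩
    rw [show (1 : ℝ) - (1 - y) = y from by ring] at h
    rw [← h]
    exact ENNReal.toReal_nonneg
  have hpos : ∀ᶠ n : ℕ in atTop, 0 < ℓ (1/(n:ℝ)) := by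
    have h1 : Tendsto (fun n : ℕ => ℓ (1/(n:ℝ)) / ℓ (1/(n:ℝ))) atTop (nhds 1) := by
      simpa using hcomp 1 one_pos
    filter_upwards [h1.eventually_const_lt (by norm_num : (1:ℝ)/2 < 1),
      eventually_ge_atTop 1] with n hn hn1
    have hnp : (0:ℝ) < n := by exact_mod_cast hn1
    have hne : ℓ (1/(n:ℝ)) ≠ 0 := by
      intro h0
      rw [h0] at hn
      norm_num at hn
    have h2 : (0:ℝ) < 1/(n:ℝ) := by positivity
    have h3 : (1:ℝ)/(n:ℝ) ≤ 1 := by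
      rw [div_le_one hnp]; exact_mod_cast hn1
    have := hnonneg (1/(n:ℝ)) h2 h3
    have hrp : (0:ℝ) < (1/(n:ℝ)) ^ α := rpow_pos_of_pos h2 α
    rcases lt_or_eq_of_le (le_of_not_gt fun hneg : ℓ (1/(n:ℝ)) < 0 => by nlinarith) with h | h
    · exact h
    · exact absurd h.symm hne
  -- monotonicity
  have hmono : ∀ a b : ℝ, 0 < a → a ≤ b → b ≤ 1 → a ^ α * ℓ a ≤ b ^ α * ℓ b := by
    intro a b ha0 hab hb1
    have ha := htail (1 - a) ⟨by linarith, by linarith⟩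
    have hb := htail (1 - b) ⟨by linarith, by linarith⟩
    rw [show (1 : ℝ) - (1 - a) = a from by ring] at ha
    rw [show (1 : ℝ) - (1 - b) = b from by ring] at hb
    rw [← ha, ← hb]
    refine ENNReal.toReal_mono (measure_ne_top P _) (measure_mono ?_)
    intro ω hω
    simp only [Set.mem_setOf_eq] at *
    linarith
  have hd : ∀ᶠ n : ℕ in atTop, 0 < d n ∧ d n ≤ 1 ∧ u n = n * d n := by
    filter_upwards [eventually_ge_atTop 1] with n hn
    have hnp : (0:ℝ) < n := by exact_mod_cast hn
    have hxlt : (s/t) ^ ((1:ℝ)/n) < 1 := Real.rpow_lt_one hr0.le hr1 (by positivity)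
    have hxpos : 0 < (s/t) ^ ((1:ℝ)/n) := Real.rpow_pos_of_pos hr0 _
    exact ⟨by simp only [hddef]; linarith, by simp only [hddef]; linarith, rfl⟩
  have hratio := aux_ratio9 ℓ α L hα hL hcomp hmono hpos d u hd hu
  have huα : Tendsto (fun n : ℕ => (u n) ^ α) atTop (nhds (L ^ α)) :=
    (Real.continuousAt_rpow_const L α (Or.inl hL.ne')).tendsto.comp hu
  have hmain : Tendsto
      (fun n : ℕ => ((N n : ℝ) * (n : ℝ) ^ (-α) * ℓ (1 / n)) * (u n) ^ α *
        (ℓ (d n) / ℓ (1/(n:ℝ)))) atTop (nhds (c * L ^ α)) := by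
    have := (hN.mul huα).mul hratio
    simpa using this
  refine hmain.congr' ?_
  filter_upwards [eventually_ge_atTop 1, hpos] with n hn1 hln
  have hnp : (0:ℝ) < n := by exact_mod_cast hn1
  have hxmem : (s/t) ^ ((1:ℝ)/n) ∈ Set.Icc (0:ℝ) 1 :=
    ⟨Real.rpow_nonneg hr0.le _, Real.rpow_le_one hr0.le hr1.le (by positivity)⟩
  rw [htail _ hxmem]
  have hxlt : (s/t) ^ ((1:ℝ)/n) < 1 := Real.rpow_lt_one hr0.le hr1 (by positivity)
  have hd0 : 0 < d n := by simp only [hddef]; linarith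
  have hueq : (u n) ^ α = (n:ℝ) ^ α * (d n) ^ α := by
    rw [show u n = (n:ℝ) * d n from rfl, Real.mul_rpow hnp.le hd0.le]
  have hnn : (0:ℝ) < (n:ℝ) ^ α := rpow_pos_of_pos hnp α
  rw [hueq, Real.rpow_neg hnp.le]
  show (N n : ℝ) * ((n:ℝ) ^ α)⁻¹ * ℓ (1/(n:ℝ)) * ((n:ℝ) ^ α * (d n) ^ α) *
      (ℓ (d n) / ℓ (1/(n:ℝ))) = (N n : ℝ) * ((1 - (s/t) ^ ((1:ℝ)/n)) ^ α * ℓ (1 - (s/t) ^ ((1:ℝ)/n)))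
  rw [show (1 : ℝ) - (s/t) ^ ((1:ℝ)/n) = d n from rfl]
  field_simp
end

section
/- Let X be an ℝ^d-valued random variable, θ > 0, and suppose X satisfies the distributional fixed-point equation X =_d U^(1/θ)(X + Z), where U ~ U(0,1), Z ~ ν_1, and U, X, Z are independent. Then X =_d Σ_{i=1}^∞ Z_i (U_1 U_2 ⋯ U_i)^(1/θ), where Z_1, Z_2, … are i.i.d. with law ν_1 and U_1, U_2, … are i.i.d. U(0,1), independent of the Z_i's, provided the series converges almost surely. -/
/-! Write `φ (u, z) y = u ^ (1 / θ) • (y + z)`, so that the fixed-point equation says that `φ`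
applied to an independent `(U, Z) ~ U(0,1) ⊗ ν₁` preserves the law `μ` of `X`. Realise the pairs
`W i = (U_{i+1}, Z_{i+1})` and `X` independently on `P' ⊗ P`; then the backward composition
`φ (W 0) (φ (W 1) (⋯ φ (W (n-1)) X))` still has law `μ`. It equals the `n`-th partial sum of the
series plus `(U_1 ⋯ U_n) ^ (1 / θ) • X`, and `U_1 ⋯ U_n → 0` a.s. because it decreases and has
mean `2⁻ⁿ`. So the iterates converge a.s. to the series, whose law must therefore be `μ`. -/

open MeasureTheory ProbabilityTheory Real Filter Topology Finset
open scoped ENNReal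

section BackwardIterate

variable {α β : Type*}

def backwardIterate (φ : α → β → β) : (n : ℕ) → (Fin n → α) → β → β
  | 0, _, x => x
  | n + 1, w, x => φ (w 0) (backwardIterate φ n (Fin.tail w) x)

lemma backwardIterate_smul_add {R M : Type*} [CommSemiring R] [AddCommMonoid M] [Module R M]
    (c : α → R) (z : α → M) (n : ℕ) (w : ℕ → α) (x : M) :
    backwardIterate (fun a y => c a • (y + z a)) n (fun i : Fin n => w i) x =
      ∑ i ∈ range n, (∏ j ∈ range (i + 1), c (w j)) • z (w i) +
        (∏ j ∈ range n, c (w j)) • x := by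
  induction n generalizing w with
  | zero => simp [backwardIterate]
  | succ n ih =>
    change c (w 0) • (backwardIterate _ n (fun i : Fin n => w (i + 1)) x + z (w 0)) = _
    rw [ih (fun k => w (k + 1)), sum_range_succ']
    simp only [prod_range_succ' (fun j => c (w j)), smul_add, smul_sum, smul_smul,
      prod_range_zero, one_mul, mul_comm (c (w 0))]
    abel

lemma tendsto_backwardIterate_rpow_smul_add {E : Type*} [NormedAddCommGroup E]
    [NormedSpace ℝ E] {θ : ℝ} (hθ : 0 < θ) {w : ℕ → ℝ × E} (x : E) (hw : ∀ j, 0 ≤ (w j).1)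
    (hprod : Tendsto (fun n => ∏ j ∈ range n, (w j).1) atTop (𝓝 0))
    (hsum : Summable fun i => (∏ j ∈ range (i + 1), (w j).1) ^ (1 / θ) • (w i).2) :
    Tendsto (fun n => backwardIterate (fun a y => a.1 ^ (1 / θ) • (y + a.2)) n
      (fun i : Fin n => w i) x) atTop
      (𝓝 (∑' i, (∏ j ∈ range (i + 1), (w j).1) ^ (1 / θ) • (w i).2)) := by
  have hrpow n : ∏ j ∈ range n, (w j).1 ^ (1 / θ) = (∏ j ∈ range n, (w j).1) ^ (1 / θ) :=
    finsetProd_rpow _ _ (fun j _ => hw j) _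
  have hrem : Tendsto (fun n => (∏ j ∈ range n, (w j).1) ^ (1 / θ) • x) atTop (𝓝 0) := by
    have h := ((continuousAt_rpow_const 0 (1 / θ) (Or.inr (one_div_pos.2 hθ).le)).tendsto.comp
      hprod).smul_const x
    rwa [zero_rpow (one_div_pos.2 hθ).ne', zero_smul] at h
  simp_rw [backwardIterate_smul_add (fun a : ℝ × E => a.1 ^ (1 / θ)) Prod.snd, hrpow]
  simpa using hsum.hasSum.tendsto_sum_nat.add hrem

lemma measurePreserving_backwardIterate [MeasurableSpace α] [MeasurableSpace β]
    {φ : α → β → β} {m : Measure α} {μ : Measure β} [IsProbabilityMeasure m] [SFinite μ]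
    (hφ : MeasurePreserving (Function.uncurry φ) (m.prod μ) μ) (n : ℕ) :
    MeasurePreserving (Function.uncurry (backwardIterate φ n))
      ((Measure.pi fun _ : Fin n => m).prod μ) μ := by
  induction n with
  | zero => exact measurePreserving_snd
  | succ n ih =>
    have hsplit := (measurePreserving_piFinSuccAbove (fun _ : Fin (n + 1) => m) 0).prod
      (MeasurePreserving.id μ)
    exact hφ.comp ((MeasurePreserving.id m).prod ih |>.comp
      ((measurePreserving_prodAssoc _ _ μ).comp hsplit))

end BackwardIterate

section Probability

variable {Ω Ω' α β γ : Type*} [MeasurableSpace Ω] [MeasurableSpace Ω'] [MeasurableSpace α]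
  [MeasurableSpace β] [MeasurableSpace γ]

lemma measurePreserving_of_map_eq_map_of_indepFun {P : Measure Ω} [IsProbabilityMeasure P]
    {U : Ω → α} {X : Ω → β} {Z : Ω → γ} {φ : α × γ → β → β}
    (hφ : Measurable (Function.uncurry φ))
    (hU : Measurable U) (hX : Measurable X) (hZ : Measurable Z)
    (hXZ : IndepFun X Z P) (hU_XZ : IndepFun U (fun ω => (X ω, Z ω)) P)
    (hfix : P.map X = P.map (fun ω => φ (U ω, Z ω) (X ω))) :
    MeasurePreserving (Function.uncurry φ) (((P.map U).prod (P.map Z)).prod (P.map X))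
      (P.map X) := by
  refine ⟨hφ, ?_⟩
  have hlaw : P.map (fun ω => (U ω, (X ω, Z ω))) =
      (P.map U).prod ((P.map X).prod (P.map Z)) := by
    rw [hU_XZ.map_prod_eq_prod_map_map hU.aemeasurable (hX.prodMk hZ).aemeasurable,
      hXZ.map_prod_eq_prod_map_map hX.aemeasurable hZ.aemeasurable]
  have hshuffle : MeasurePreserving (fun p : α × β × γ => ((p.1, p.2.2), p.2.1))
      ((P.map U).prod ((P.map X).prod (P.map Z))) (((P.map U).prod (P.map Z)).prod (P.map X)) :=
    (measurePreserving_prodAssoc _ _ _).symm MeasurableEquiv.prodAssoc |>.comp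
      ((MeasurePreserving.id _).prod Measure.measurePreserving_swap)
  rw [← hshuffle.map_eq, ← hlaw, Measure.map_map hφ hshuffle.measurable,
    Measure.map_map (hφ.comp hshuffle.measurable) (hU.prodMk (hX.prodMk hZ)), hfix]
  rfl

lemma map_backwardIterate_eq_of_iIndepFun {P' : Measure Ω'} [IsProbabilityMeasure P']
    {P : Measure Ω} [IsProbabilityMeasure P] {m : Measure α} {φ : α → β → β}
    {W : ℕ → Ω' → α} {X : Ω → β} (hWmeas : ∀ i, Measurable (W i)) (hWindep : iIndepFun W P')
    (hWlaw : ∀ i, P'.map (W i) = m) (hX : Measurable X)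
    (hφ : MeasurePreserving (Function.uncurry φ) (m.prod (P.map X)) (P.map X)) (n : ℕ) :
    (P'.prod P).map (fun q => backwardIterate φ n (fun i : Fin n => W i q.1) (X q.2)) =
      P.map X := by
  have : IsProbabilityMeasure m :=
    hWlaw 0 ▸ Measure.isProbabilityMeasure_map (hWmeas 0).aemeasurable
  have hprefix : P'.map (fun ω (i : Fin n) => W i ω) = Measure.pi fun _ => m := by
    have hind : iIndepFun (fun i : Fin n => W i) P' := hWindep.precomp Fin.val_injective
    rw [hind.map_fun_eq_pi_map fun i : Fin n => (hWmeas i).aemeasurable]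
    simp only [hWlaw]
  have hprefix_meas : Measurable fun ω (i : Fin n) => W i ω := by fun_prop
  rw [← (measurePreserving_backwardIterate hφ n).map_eq, ← hprefix,
    Measure.map_prod_map _ _ hprefix_meas hX,
    Measure.map_map (measurePreserving_backwardIterate hφ n).measurable
      (hprefix_meas.prodMap hX)]
  rfl

lemma ae_mem_of_map_eq_restrict {μ : Measure Ω} {ν : Measure α} {V : Ω → α} {s : Set α}
    (hV : Measurable V) (hs : MeasurableSet s) (hlaw : μ.map V = ν.restrict s) :
    ∀ᵐ ω ∂μ, V ω ∈ s :=
  (ae_map_iff hV.aemeasurable hs).1 (hlaw ▸ ae_restrict_mem hs)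

lemma ae_tendsto_prod_zero_of_iIndepFun {μ : Measure Ω} {V : ℕ → Ω → ℝ≥0∞}
    (hV : iIndepFun V μ) (hmeas : ∀ j, Measurable (V j)) (hle : ∀ j, ∀ᵐ ω ∂μ, V j ω ≤ 1)
    {r : ℝ≥0∞} (hr : r < 1) (hmean : ∀ j, ∫⁻ ω, V j ω ∂μ ≤ r) :
    ∀ᵐ ω ∂μ, Tendsto (fun n => ∏ j ∈ range n, V j ω) atTop (𝓝 0) := by
  have := hV.isProbabilityMeasure
  have hanti : ∀ᵐ ω ∂μ, Antitone fun n => ∏ j ∈ range n, V j ω := by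
    filter_upwards [ae_all_iff.2 hle] with ω h
    refine antitone_nat_of_succ_le fun n => ?_
    rw [prod_range_succ]
    exact mul_le_of_le_one_right' (h n)
  have hmean_prod : ∀ n, ∫⁻ ω, ∏ j ∈ range n, V j ω ∂μ ≤ r ^ n := fun n => by
    rw [lintegral_prod_eq_prod_lintegral_of_indepFun _ _ hV hmeas]
    simpa using prod_le_pow_card (range n) _ _ fun j _ => hmean j
  have hinf : ∫⁻ ω, ⨅ n, ∏ j ∈ range n, V j ω ∂μ = 0 := by
    rw [lintegral_iInf' (fun n => (Finset.measurable_prod _ fun j _ => hmeas j).aemeasurable)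
      hanti (by simp)]
    refine nonpos_iff_eq_zero.1 <|
      ge_of_tendsto' (ENNReal.tendsto_pow_atTop_nhds_zero_of_lt_one hr)
        fun n => (iInf_le _ n).trans (hmean_prod n)
  filter_upwards [hanti, (lintegral_eq_zero_iff (Measurable.iInf fun n =>
    Finset.measurable_prod _ fun j _ => hmeas j)).1 hinf] with ω hω hω_inf
  simpa [hω_inf] using tendsto_atTop_iInf hω

lemma lintegral_ofReal_uniform_Ioo :
    ∫⁻ x in Set.Ioo (0 : ℝ) 1, ENNReal.ofReal x = 2⁻¹ := by
  rw [← ofReal_integral_eq_lintegral_ofReal, ← integral_Ioc_eq_integral_Ioo,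
    ← intervalIntegral.integral_of_le zero_le_one, integral_id]
  · rw [one_pow, zero_pow two_ne_zero, sub_zero, one_div, ENNReal.ofReal_inv_of_pos two_pos,
      ENNReal.ofReal_ofNat]
  · exact continuous_id.integrableOn_Icc.mono_set Set.Ioo_subset_Icc_self
  · exact ae_restrict_of_forall_mem measurableSet_Ioo fun x hx => hx.1.le

lemma ae_tendsto_prod_zero_of_iIndepFun_uniform {μ : Measure Ω} {V : ℕ → Ω → ℝ}
    (hV : iIndepFun V μ) (hmeas : ∀ j, Measurable (V j))
    (hlaw : ∀ j, μ.map (V j) = volume.restrict (Set.Ioo 0 1)) :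
    ∀ᵐ ω ∂μ, Tendsto (fun n => ∏ j ∈ range n, V j ω) atTop (𝓝 0) := by
  have hIoo j := ae_mem_of_map_eq_restrict (hmeas j) measurableSet_Ioo (hlaw j)
  have hprod := ae_tendsto_prod_zero_of_iIndepFun (V := fun j ω => ENNReal.ofReal (V j ω))
    (hV.comp _ fun _ => ENNReal.measurable_ofReal) (fun j => (hmeas j).ennreal_ofReal)
    (fun j => (hIoo j).mono fun ω h => ENNReal.ofReal_le_one.2 h.2.le)
    (by norm_num : (2 : ℝ≥0∞)⁻¹ < 1) fun j => by
      rw [← lintegral_map ENNReal.measurable_ofReal (hmeas j), hlaw j,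
        lintegral_ofReal_uniform_Ioo]
  filter_upwards [hprod, ae_all_iff.2 hIoo] with ω hω hω_Ioo
  have hnonneg n : 0 ≤ ∏ j ∈ range n, V j ω := prod_nonneg fun j _ => (hω_Ioo j).1.le
  simp_rw [← ENNReal.ofReal_prod_of_nonneg fun j _ => (hω_Ioo j).1.le] at hω
  simpa [Function.comp_def, ENNReal.toReal_ofReal (hnonneg _)] using
    (ENNReal.tendsto_toReal ENNReal.zero_ne_top).comp hω

lemma map_eq_of_ae_tendsto {E : Type*} [TopologicalSpace E]
    [TopologicalSpace.PseudoMetrizableSpace E] [MeasurableSpace E] [BorelSpace E]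
    {μ : Measure Ω} [IsProbabilityMeasure μ] {ν : Measure E} [IsProbabilityMeasure ν]
    {f : ℕ → Ω → E} {g : Ω → E} (hlaw : ∀ n, μ.map (f n) = ν)
    (hlim : ∀ᵐ ω ∂μ, Tendsto (fun n => f n ω) atTop (𝓝 (g ω))) :
    μ.map g = ν := by
  -- `μ.map` sends a function that is not a.e.-measurable to `0`.
  have hf n : AEMeasurable (f n) μ :=
    .of_map_ne_zero <| (hlaw n).symm ▸ IsProbabilityMeasure.ne_zero ν
  have hg : AEMeasurable g μ := aemeasurable_of_tendsto_metrizable_ae atTop hf hlim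
  have hconst : TendstoInDistribution f atTop (f 0) (fun _ => μ) μ :=
    tendstoInDistribution_of_identDistrib 0
      (fun n => ⟨hf 0, hf n, (hlaw 0).trans (hlaw n).symm⟩) (IdentDistrib.refl (hf 0))
  rw [tendstoInDistribution_unique f (tendstoInDistribution_of_ae_tendsto hf hg hlim) hconst,
    hlaw 0]

lemma ae_tendsto_backwardIterate_rpow_smul_add {μ : Measure Ω} {E : Type*}
    [NormedAddCommGroup E] [NormedSpace ℝ E] [MeasurableSpace E] {θ : ℝ} (hθ : 0 < θ)
    {W : ℕ → Ω → ℝ × E} (hWmeas : ∀ i, Measurable (W i)) (hWindep : iIndepFun W μ)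
    (hWlaw : ∀ i, μ.map (fun ω => (W i ω).1) = volume.restrict (Set.Ioo 0 1))
    (hconv : ∀ᵐ ω ∂μ,
      Summable fun i => (∏ j ∈ range (i + 1), (W j ω).1) ^ (1 / θ) • (W i ω).2) :
    ∀ᵐ ω ∂μ, ∀ x, Tendsto (fun n => backwardIterate (fun a y => a.1 ^ (1 / θ) • (y + a.2)) n
      (fun i : Fin n => W i ω) x) atTop
      (𝓝 (∑' i, (∏ j ∈ range (i + 1), (W j ω).1) ^ (1 / θ) • (W i ω).2)) := by
  have hpos : ∀ᵐ ω ∂μ, ∀ j, 0 ≤ (W j ω).1 := ae_all_iff.2 fun j =>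
    (ae_mem_of_map_eq_restrict (hWmeas j).fst measurableSet_Ioo (hWlaw j)).mono fun _ h => h.1.le
  have hprod := ae_tendsto_prod_zero_of_iIndepFun_uniform
    (hWindep.comp _ fun _ => measurable_fst) (fun j => (hWmeas j).fst) hWlaw
  filter_upwards [hconv, hpos, hprod] with ω hsum hw hprod x
  exact tendsto_backwardIterate_rpow_smul_add hθ x hw hprod hsum

end Probability

/-- If `X` satisfies the fixed-point equation `X =_d U^(1/θ)(X + Z)` with `U ~ U(0,1)`,
`Z ~ ν₁`, and `U, X, Z` mutually independent, then `X =_d Σ_i Z_i (U_1 ⋯ U_i)^(1/θ)`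
for i.i.d. pairs `(U_i, Z_i)` with law `U(0,1) ⊗ ν₁`, provided the series converges a.s. -/
theorem stmt11 {d : ℕ} (θ : ℝ) (hθ : 0 < θ)
    (ν₁ : Measure (EuclideanSpace ℝ (Fin d))) [IsProbabilityMeasure ν₁]
    {Ω : Type*} [MeasurableSpace Ω] (P : Measure Ω) [IsProbabilityMeasure P]
    (X : Ω → EuclideanSpace ℝ (Fin d)) (U : Ω → ℝ) (Z : Ω → EuclideanSpace ℝ (Fin d))
    (hXmeas : Measurable X) (hUmeas : Measurable U) (hZmeas : Measurable Z)
    (hUlaw : Measure.map U P = volume.restrict (Set.Ioo (0 : ℝ) 1))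
    (hZlaw : Measure.map Z P = ν₁)
    (hXZ : IndepFun X Z P) (hU_XZ : IndepFun U (fun ω => (X ω, Z ω)) P)
    (hfix : Measure.map X P =
      Measure.map (fun ω => (U ω ^ (1 / θ)) • (X ω + Z ω)) P)
    {Ω' : Type*} [MeasurableSpace Ω'] (P' : Measure Ω') [IsProbabilityMeasure P']
    (W : ℕ → Ω' → ℝ × EuclideanSpace ℝ (Fin d)) (hWmeas : ∀ i, Measurable (W i))
    (hWindep : iIndepFun W P')
    (hWlaw : ∀ i, Measure.map (W i) P' = (volume.restrict (Set.Ioo (0 : ℝ) 1)).prod ν₁)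
    (hconv : ∀ᵐ ω ∂P', Summable (fun i : ℕ =>
      ((∏ j ∈ Finset.range (i + 1), (W j ω).1) ^ (1 / θ)) • (W i ω).2)) :
    Measure.map X P =
      Measure.map (fun ω => ∑' i : ℕ,
        ((∏ j ∈ Finset.range (i + 1), (W j ω).1) ^ (1 / θ)) • (W i ω).2) P' := by
  set S := fun ω => ∑' i : ℕ, ((∏ j ∈ range (i + 1), (W j ω).1) ^ (1 / θ)) • (W i ω).2
  have hstat : MeasurePreserving (Function.uncurry fun (a : ℝ × EuclideanSpace ℝ (Fin d)) y =>
      a.1 ^ (1 / θ) • (y + a.2)) (((volume.restrict (Set.Ioo 0 1)).prod ν₁).prod (P.map X))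
      (P.map X) := by
    rw [← hUlaw, ← hZlaw]
    exact measurePreserving_of_map_eq_map_of_indepFun (by fun_prop) hUmeas hXmeas hZmeas hXZ
      hU_XZ hfix
  have hfst j : P'.map (fun ω => (W j ω).1) = volume.restrict (Set.Ioo 0 1) := by
    rw [← Function.comp_def, ← Measure.map_map measurable_fst (hWmeas j), hWlaw j,
      Measure.map_fst_prod, measure_univ, one_smul]
  have hlim := ae_tendsto_backwardIterate_rpow_smul_add hθ hWmeas hWindep hfst hconv
  have hS : AEMeasurable S P' := aemeasurable_of_tendsto_metrizable_ae atTop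
    (fun n => (by fun_prop : Measurable _).aemeasurable)
    (hconv.mono fun _ h => h.hasSum.tendsto_sum_nat)
  have : IsProbabilityMeasure (P.map X) := Measure.isProbabilityMeasure_map hXmeas.aemeasurable
  calc P.map X = (P'.prod P).map (fun q => S q.1) := by
        refine (map_eq_of_ae_tendsto (map_backwardIterate_eq_of_iIndepFun hWmeas hWindep hWlaw
          hXmeas hstat) ?_).symm
        filter_upwards [Measure.quasiMeasurePreserving_fst.ae hlim] with q hq
        exact hq (X q.2)
    _ = P'.map S := by
        have hmap_fst : (P'.prod P).map Prod.fst = P' := measurePreserving_fst.map_eq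
        rw [← Function.comp_def, ← AEMeasurable.map_map_of_aemeasurable (by rwa [hmap_fst])
          measurable_fst.aemeasurable, hmap_fst]
end

section
/- Let θ > 0 and let ν_1 be a probability measure on ℝ^d with ∫_{|x|>2} log|x| ν_1(dx) < ∞. Let Z_1, Z_2, … ~ ν_1 i.i.d. and U_1, U_2, … ~ U(0,1) i.i.d., all independent. Then the series Σ_{i=1}^∞ Z_i (U_1 U_2 ⋯ U_i)^(1/θ) converges almost surely in ℝ^d. -/
open MeasureTheory ProbabilityTheory Real
open scoped ENNReal

open Filter Finset Set Topology

/-! With `Sₙ = ∑_{j<n} -log Uⱼ`, the `i`-th term has norm `exp (-S_{i+1} / θ) ‖Zᵢ‖`. Since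
`-log U` has mean `1`, the strong law gives `Sₙ / n → 1`; since `log⁺ ‖Z‖` is integrable,
Borel–Cantelli gives `‖Zₙ‖ ≤ exp ((n + 1) / (2θ))` eventually. Hence the terms are eventually
dominated by a geometric series. -/

lemma integrableOn_neg_log_Ioo_zero_one : IntegrableOn (fun x => -log x) (Ioo (0 : ℝ) 1) :=
  (intervalIntegrable_iff_integrableOn_Ioo_of_le zero_le_one).1
    intervalIntegral.intervalIntegrable_log'.neg

lemma setIntegral_neg_log_Ioo_zero_one : ∫ x in Ioo (0 : ℝ) 1, -log x = 1 := by
  rw [← integral_Ioc_eq_integral_Ioo, ← intervalIntegral.integral_of_le zero_le_one,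
    intervalIntegral.integral_neg, integral_log]
  simp

lemma ae_tendsto_sum_neg_log_div_of_uniform {Ω : Type*} [MeasurableSpace Ω] {P : Measure Ω}
    {U : ℕ → Ω → ℝ} (hU : ∀ i, Measurable (U i))
    (hindep : Pairwise fun i j => IndepFun (U i) (U j) P)
    (hlaw : ∀ i, P.map (U i) = volume.restrict (Ioo 0 1)) :
    ∀ᵐ ω ∂P, Tendsto (fun n : ℕ => (∑ i ∈ range n, -log (U i ω)) / n) atTop (𝓝 1) := by
  have hmeas : Measurable fun x : ℝ => -log x := measurable_log.neg
  have hint : Integrable ((fun x => -log x) ∘ U 0) P := by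
    rw [← integrable_map_measure hmeas.aestronglyMeasurable (hU 0).aemeasurable, hlaw 0]
    exact integrableOn_neg_log_Ioo_zero_one
  have hmean : ∫ ω, -log (U 0 ω) ∂P = 1 := by
    rw [← integral_map (hU 0).aemeasurable hmeas.aestronglyMeasurable, hlaw 0,
      setIntegral_neg_log_Ioo_zero_one]
  have hident : ∀ i, IdentDistrib (U i) (U 0) P P := fun i =>
    ⟨(hU i).aemeasurable, (hU 0).aemeasurable, by rw [hlaw i, hlaw 0]⟩
  have hlln := strong_law_ae_real (fun i => (fun x => -log x) ∘ U i) hint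
    (fun i j hij => (hindep hij).comp hmeas hmeas) (fun i => (hident i).comp hmeas)
  simp only [Function.comp_apply] at hlln
  rwa [hmean] at hlln

lemma tsum_ite_natCast_add_one_le (t : ℝ≥0∞) :
    ∑' n : ℕ, (if (n : ℝ≥0∞) + 1 ≤ t then 1 else 0) ≤ t := by
  refine ENNReal.tsum_le_of_sum_range_le fun N => ?_
  suffices ∑ n ∈ range N, (if (n : ℝ≥0∞) + 1 ≤ t then 1 else 0) ≤ min (N : ℝ≥0∞) t from
    this.trans (min_le_right _ _)
  induction N with
  | zero => simp
  | succ N ih =>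
    rw [sum_range_succ]
    split_ifs with h
    · rw [min_eq_left (le_self_add.trans h)] at ih
      push_cast
      rw [min_eq_left h]
      gcongr
    · simpa using ih.trans (min_le_min_right _ (by simp))

lemma tsum_measure_natCast_add_one_le_le_lintegral {α : Type*} [MeasurableSpace α]
    (μ : Measure α) {g : α → ℝ≥0∞} (hg : Measurable g) :
    ∑' n : ℕ, μ {x | (n : ℝ≥0∞) + 1 ≤ g x} ≤ ∫⁻ x, g x ∂μ := by
  have hset (n : ℕ) : MeasurableSet {x | (n : ℝ≥0∞) + 1 ≤ g x} :=
    measurableSet_le measurable_const hg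
  calc ∑' n : ℕ, μ {x | (n : ℝ≥0∞) + 1 ≤ g x}
      = ∫⁻ x, ∑' n : ℕ, {x | (n : ℝ≥0∞) + 1 ≤ g x}.indicator 1 x ∂μ := by
        rw [lintegral_tsum fun n => (measurable_one.indicator (hset n)).aemeasurable]
        simp_rw [lintegral_indicator_one (hset _)]
    _ ≤ ∫⁻ x, g x ∂μ := lintegral_mono fun x => by
        simpa [Set.indicator_apply] using tsum_ite_natCast_add_one_le (g x)

lemma ae_eventually_lt_natCast_add_one {Ω E : Type*} [MeasurableSpace Ω] [MeasurableSpace E]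
    {P : Measure Ω} {ν : Measure E} {Y : ℕ → Ω → E} (hY : ∀ n, Measurable (Y n))
    (hlaw : ∀ n, P.map (Y n) = ν) {g : E → ℝ≥0∞} (hg : Measurable g)
    (hint : ∫⁻ x, g x ∂ν ≠ ∞) :
    ∀ᵐ ω ∂P, ∀ᶠ n : ℕ in atTop, g (Y n ω) < n + 1 := by
  have hP (n : ℕ) :
      P {ω | (n : ℝ≥0∞) + 1 ≤ g (Y n ω)} = ν {x | (n : ℝ≥0∞) + 1 ≤ g x} := by
    rw [← hlaw n, Measure.map_apply (hY n) (measurableSet_le measurable_const hg)]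
    rfl
  have hsum : ∑' n : ℕ, P {ω | (n : ℝ≥0∞) + 1 ≤ g (Y n ω)} ≠ ∞ :=
    ne_top_of_le_ne_top hint
      ((tsum_congr hP).trans_le (tsum_measure_natCast_add_one_le_le_lintegral ν hg))
  filter_upwards [ae_eventually_notMem hsum] with ω hω
  filter_upwards [hω] with n hn
  simpa using hn

lemma lintegral_ofReal_log_norm_lt_top {E : Type*} [NormedAddCommGroup E] [MeasurableSpace E]
    [OpensMeasurableSpace E] {ν : Measure E} [IsFiniteMeasure ν] {R : ℝ}
    (h : ∫⁻ x in {x | R < ‖x‖}, ENNReal.ofReal (log ‖x‖) ∂ν < ∞) :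
    ∫⁻ x, ENNReal.ofReal (log ‖x‖) ∂ν < ∞ := by
  rw [← lintegral_add_compl _ (measurableSet_lt measurable_const measurable_norm)]
  refine ENNReal.add_lt_top.2 ⟨h, ?_⟩
  calc ∫⁻ x in {x | R < ‖x‖}ᶜ, ENNReal.ofReal (log ‖x‖) ∂ν
      ≤ ∫⁻ x in {x | R < ‖x‖}ᶜ, ENNReal.ofReal R ∂ν :=
        setLIntegral_mono measurable_const fun x hx =>
          ENNReal.ofReal_le_ofReal ((log_le_self (norm_nonneg x)).trans (not_lt.1 hx))
    _ < ∞ := by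
        rw [setLIntegral_const]
        exact ENNReal.mul_lt_top ENNReal.ofReal_lt_top (measure_lt_top _ _)

lemma ae_eventually_norm_le_exp {Ω E : Type*} [MeasurableSpace Ω] [NormedAddCommGroup E]
    [MeasurableSpace E] [OpensMeasurableSpace E] {P : Measure Ω} {ν : Measure E}
    {Z : ℕ → Ω → E} (hZ : ∀ n, Measurable (Z n)) (hlaw : ∀ n, P.map (Z n) = ν)
    (hlog : ∫⁻ x, ENNReal.ofReal (log ‖x‖) ∂ν < ∞) {ε : ℝ} (hε : 0 < ε) :
    ∀ᵐ ω ∂P, ∀ᶠ n : ℕ in atTop, ‖Z n ω‖ ≤ exp (ε * (n + 1)) := by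
  have hg : Measurable fun x : E => ENNReal.ofReal (log ‖x‖ / ε) := by fun_prop
  have hint : ∫⁻ x, ENNReal.ofReal (log ‖x‖ / ε) ∂ν ≠ ∞ := by
    simp_rw [div_eq_mul_inv, ENNReal.ofReal_mul' (inv_nonneg.2 hε.le)]
    rw [lintegral_mul_const' _ _ ENNReal.ofReal_ne_top]
    exact ENNReal.mul_ne_top hlog.ne ENNReal.ofReal_ne_top
  filter_upwards [ae_eventually_lt_natCast_add_one hZ hlaw hg hint] with ω hω
  filter_upwards [hω] with n hn
  rcases (norm_nonneg (Z n ω)).eq_or_lt with h0 | hpos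
  · rw [← h0]
    exact (exp_pos _).le
  · have hcast : (n : ℝ≥0∞) + 1 = ENNReal.ofReal (n + 1) := by
      rw [ENNReal.ofReal_add (by positivity) zero_le_one]
      simp
    rw [hcast, ENNReal.ofReal_lt_ofReal_iff (by positivity), div_lt_iff₀ hε] at hn
    rw [← exp_log hpos]
    exact exp_le_exp.2 (by linarith)

lemma summable_exp_neg_smul_of_tendsto {E : Type*} [NormedAddCommGroup E] [NormedSpace ℝ E]
    [CompleteSpace E] {s : ℕ → ℝ} {z : ℕ → E} {c ε : ℝ} (hεc : ε < c)
    (hs : Tendsto (fun n : ℕ => s n / (n + 1)) atTop (𝓝 c))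
    (hz : ∀ᶠ n : ℕ in atTop, ‖z n‖ ≤ exp (ε * (n + 1))) :
    Summable fun n => exp (-s n) • z n := by
  obtain ⟨δ, hεδ, hδc⟩ := exists_between hεc
  have hgeom : Summable fun n : ℕ => exp (((n + 1 : ℕ) : ℝ) * (ε - δ)) :=
    (summable_nat_add_iff 1).2 (summable_exp_nat_mul_iff.2 (by linarith))
  refine hgeom.of_norm_bounded_eventually ?_
  rw [Nat.cofinite_eq_atTop]
  filter_upwards [hs.eventually_const_lt hδc, hz] with n hsn hzn
  have hsn' : δ * (n + 1) < s n := (lt_div_iff₀ (by positivity)).1 hsn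
  calc ‖exp (-s n) • z n‖ = exp (-s n) * ‖z n‖ := by
        rw [norm_smul, norm_of_nonneg (exp_pos _).le]
    _ ≤ exp (-(δ * (n + 1))) * exp (ε * (n + 1)) := by gcongr
    _ = exp (((n + 1 : ℕ) : ℝ) * (ε - δ)) := by
        rw [← exp_add]
        push_cast
        ring_nf

theorem stmt12_general {d : ℕ} (θ : ℝ) (hθ : 0 < θ)
    (ν₁ : Measure (EuclideanSpace ℝ (Fin d))) [IsProbabilityMeasure ν₁]
    (hlog : (∫⁻ x in {x : EuclideanSpace ℝ (Fin d) | 2 < ‖x‖},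
        ENNReal.ofReal (Real.log ‖x‖) ∂ν₁) < ∞)
    {Ω : Type*} [MeasurableSpace Ω] (P : Measure Ω)
    (W : ℕ → Ω → ℝ × EuclideanSpace ℝ (Fin d)) (hWmeas : ∀ i, Measurable (W i))
    (hWindep : iIndepFun W P)
    (hWlaw : ∀ i, Measure.map (W i) P = (volume.restrict (Set.Ioo (0 : ℝ) 1)).prod ν₁) :
    ∀ᵐ ω ∂P, Summable (fun i : ℕ =>
      ((∏ j ∈ Finset.range (i + 1), (W j ω).1) ^ (1 / θ)) • (W i ω).2) := by
  have hU (i : ℕ) : Measurable fun ω => (W i ω).1 := (hWmeas i).fst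
  have hUlaw (i : ℕ) : P.map (fun ω => (W i ω).1) = volume.restrict (Ioo (0 : ℝ) 1) := by
    rw [show (fun ω => (W i ω).1) = Prod.fst ∘ W i from rfl,
      ← Measure.map_map measurable_fst (hWmeas i), hWlaw i, Measure.map_fst_prod]
    simp
  have hZlaw (i : ℕ) : P.map (fun ω => (W i ω).2) = ν₁ := by
    rw [show (fun ω => (W i ω).2) = Prod.snd ∘ W i from rfl,
      ← Measure.map_map measurable_snd (hWmeas i), hWlaw i, Measure.map_snd_prod]
    simp
  have hUpos : ∀ᵐ ω ∂P, ∀ i, 0 < (W i ω).1 := ae_all_iff.2 fun i =>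
    ae_of_ae_map (hU i).aemeasurable <| by
      rw [hUlaw i]
      filter_upwards [ae_restrict_mem measurableSet_Ioo] with x hx using hx.1
  have hLLN := ae_tendsto_sum_neg_log_div_of_uniform hU
    (fun i j hij => (hWindep.indepFun hij).comp measurable_fst measurable_fst) hUlaw
  have hZ := ae_eventually_norm_le_exp (fun i => (hWmeas i).snd) hZlaw
    (lintegral_ofReal_log_norm_lt_top hlog) (ε := 1 / (2 * θ)) (by positivity)
  filter_upwards [hLLN, hUpos, hZ] with ω hlln hpos hz
  refine (summable_exp_neg_smul_of_tendsto (c := 1 / θ)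
    (s := fun i => (∑ j ∈ range (i + 1), -log (W j ω).1) / θ) (by gcongr; linarith) ?_ hz).congr
    fun i => ?_
  · convert ((tendsto_add_atTop_iff_nat 1).2 hlln).div_const θ using 2 with n
    push_cast
    ring
  · rw [rpow_def_of_pos (prod_pos fun j _ => hpos j), log_prod fun j _ => (hpos j).ne']
    simp only [sum_neg_distrib]
    ring_nf

/-- Let `θ > 0` and `ν₁` a probability measure on `ℝ^d` with `∫_{‖x‖>2} log ‖x‖ ν₁(dx) < ∞`.
If `Z₁, Z₂, … ~ ν₁` i.i.d. and `U₁, U₂, … ~ U(0,1)` i.i.d., all mutually independent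
(encoded as i.i.d. pairs `W i = (U i, Z i)` with product law), then the series
`Σ_i Z_i (U_1 ⋯ U_i)^(1/θ)` converges almost surely. -/
theorem stmt12 {d : ℕ} (θ : ℝ) (hθ : 0 < θ)
    (ν₁ : Measure (EuclideanSpace ℝ (Fin d))) [IsProbabilityMeasure ν₁]
    (hlog : (∫⁻ x in {x : EuclideanSpace ℝ (Fin d) | 2 < ‖x‖},
        ENNReal.ofReal (Real.log ‖x‖) ∂ν₁) < ∞)
    {Ω : Type*} [MeasurableSpace Ω] (P : Measure Ω) [IsProbabilityMeasure P]
    (W : ℕ → Ω → ℝ × EuclideanSpace ℝ (Fin d)) (hWmeas : ∀ i, Measurable (W i))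
    (hWindep : iIndepFun W P)
    (hWlaw : ∀ i, Measure.map (W i) P = (volume.restrict (Set.Ioo (0 : ℝ) 1)).prod ν₁) :
    ∀ᵐ ω ∂P, Summable (fun i : ℕ =>
      ((∏ j ∈ Finset.range (i + 1), (W j ω).1) ^ (1 / θ)) • (W i ω).2) :=
  stmt12_general θ hθ ν₁ hlog P W hWmeas hWindep hWlaw
end
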